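/- arXiv:2404.01433 — 6 statements merged into one kernel-verified Lean document; each statement's English description precedes it below -/
import Mathlib

section
/- Let γ > 0 and m ∈ ℕ, and define ψ_m : ℝ² → ℂ by ψ_m(x₁,x₂) = (γ^((m+1)/2)/√(π·m!))·(x₁ + i x₂)^m·exp(−γ(x₁²+x₂²)/2). Then ∫_{ℝ²} (|∂₁ψ_m(x)|² + |∂₂ψ_m(x)|²) dx = (m+1)·γ. -/
/-!
With `z = x₀ + x₁ i`, `ψ = c zᵐ e^{-γ|x|²/2}` has partial derivatives
`∂ⱼψ = c (m zᵐ⁻¹ ∂ⱼz - γ xⱼ zᵐ) e^{-γ|x|²/2}`, and since `∂₀z = 1`, `∂₁z = i`,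
`|∂₀ψ|² + |∂₁ψ|² = c² e^{-γr²} (2m² r^{2(m-1)} - 2γm r^{2m} + γ² r^{2m+2})` with `r = |x|`.
Integrating in polar coordinates, each term is a Gaussian moment
`∫₀^∞ r^{2k+1} e^{-γr²} dr = k! / (2γ^{k+1})`; the three combine to `π c² (m+1)! / γᵐ`,
which is `(m+1)γ` for the normalisation `c² = γ^{m+1} / (π m!)`.
-/
open MeasureTheory Set Real
open scoped Nat

local notation "ℝ²" => EuclideanSpace ℝ (Fin 2)

section GaussianMoments

variable {b : ℝ}

lemma integrableOn_Ioi_pow_mul_exp_neg_mul_sq (hb : 0 < b) (n : ℕ) :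
    IntegrableOn (fun r : ℝ => r ^ n * exp (-b * r ^ 2)) (Ioi 0) := by
  simpa [rpow_natCast] using
    integrableOn_rpow_mul_exp_neg_mul_sq hb (s := n) (by linarith [n.cast_nonneg (α := ℝ)])

lemma integral_Ioi_odd_pow_mul_exp_neg_mul_sq (hb : 0 < b) (k : ℕ) :
    ∫ r in Ioi (0 : ℝ), r ^ (2 * k + 1) * exp (-b * r ^ 2) = k ! / (2 * b ^ (k + 1)) := by
  have h := integral_rpow_mul_exp_neg_mul_rpow two_pos (q := (2 * k + 1 : ℕ))
    (by linarith [(2 * k + 1 : ℕ).cast_nonneg (α := ℝ)]) hb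
  simp only [rpow_natCast, rpow_two] at h
  rw [h, show (((2 * k + 1 : ℕ) : ℝ) + 1) / 2 = k + 1 by push_cast; ring,
    show -(((2 * k + 1 : ℕ) : ℝ) + 1) / 2 = -((k + 1 : ℕ) : ℝ) by push_cast; ring,
    Gamma_nat_eq_factorial, rpow_neg hb.le, rpow_natCast]
  field_simp

end GaussianMoments

lemma integral_fun_norm_euclideanSpace_fin_two (f : ℝ → ℝ) :
    ∫ x : ℝ², f ‖x‖ = 2 * π * ∫ r in Ioi (0 : ℝ), r * f r := by
  rw [integral_fun_norm_addHaar volume f, finrank_euclideanSpace_fin, measureReal_def,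
    EuclideanSpace.volume_ball_fin_two]
  simp [mul_assoc, pi_nonneg]

lemma norm_sq_eq_fin_two (x : ℝ²) : ‖x‖ ^ 2 = x 0 ^ 2 + x 1 ^ 2 := by
  simp [EuclideanSpace.real_norm_sq_eq, Fin.sum_univ_two]

noncomputable def complexCoord : ℝ² →L[ℝ] ℂ :=
  Complex.orthonormalBasisOneI.repr.symm.toContinuousLinearEquiv

@[simp]
lemma complexCoord_apply (x : ℝ²) : complexCoord x = x 0 + x 1 * Complex.I := rfl

noncomputable def vortex (c γ : ℝ) (m : ℕ) (x : ℝ²) : ℂ :=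
  c * complexCoord x ^ m * Complex.exp (-γ / 2 * ‖x‖ ^ 2 : ℝ)

lemma fderiv_vortex_apply (c γ : ℝ) (m : ℕ) (x v : ℝ²) :
    fderiv ℝ (vortex c γ m) x v =
      c * (m * complexCoord x ^ (m - 1) * complexCoord v - γ * inner ℝ x v * complexCoord x ^ m) *
        Complex.exp (-γ / 2 * ‖x‖ ^ 2 : ℝ) := by
  have hpow := (hasDerivAt_pow m _).comp_hasFDerivAt x complexCoord.hasFDerivAt
  have hexponent := Complex.ofRealCLM.hasFDerivAt.comp x
    ((hasFDerivAt_id x).norm_sq.const_mul (-γ / 2))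
  have hvortex := ((hpow.mul hexponent.cexp).const_mul (c : ℂ)).congr_of_eventuallyEq
    (f₁ := vortex c γ m) (.of_forall fun y => mul_assoc _ _ _)
  rw [hvortex.fderiv]
  simp only [Function.comp_apply, complexCoord_apply, id_eq, Complex.ofRealCLM_apply,
    ContinuousLinearMap.comp_id, ContinuousLinearMap.comp_smul, add_apply,
    smul_apply, ContinuousLinearMap.comp_apply, coe_innerSL_apply,
    nsmul_eq_mul, Complex.real_smul, smul_eq_mul]
  push_cast
  ring

lemma normSq_add_normSq_vortex_factor (γ a b : ℝ) (m : ℕ) :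
    Complex.normSq (m * (a + b * Complex.I) ^ (m - 1) - γ * a * (a + b * Complex.I) ^ m) +
      Complex.normSq
        (m * (a + b * Complex.I) ^ (m - 1) * Complex.I - γ * b * (a + b * Complex.I) ^ m) =
    2 * m ^ 2 * (a ^ 2 + b ^ 2) ^ (m - 1) - 2 * γ * m * (a ^ 2 + b ^ 2) ^ m +
      γ ^ 2 * (a ^ 2 + b ^ 2) ^ (m + 1) := by
  set z : ℂ := a + b * Complex.I with hz
  rcases m with _ | n
  · simp only [Nat.cast_zero, zero_mul, zero_sub, pow_zero, mul_one, Complex.normSq_neg,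
      Complex.normSq_mul, Complex.normSq_ofReal]
    ring
  · have hfactor₀ : (n + 1 : ℕ) * z ^ (n + 1 - 1) - γ * a * z ^ (n + 1) =
        ((n + 1 - γ * a ^ 2 : ℝ) + (-(γ * a * b) : ℝ) * Complex.I) * z ^ n := by
      rw [Nat.add_sub_cancel, hz]
      push_cast
      ring
    have hfactor₁ : (n + 1 : ℕ) * z ^ (n + 1 - 1) * Complex.I - γ * b * z ^ (n + 1) =
        ((-(γ * a * b) : ℝ) + (n + 1 - γ * b ^ 2 : ℝ) * Complex.I) * z ^ n := by
      rw [Nat.add_sub_cancel, hz]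
      push_cast
      ring
    rw [hfactor₀, hfactor₁, map_mul, map_mul, map_pow, Complex.normSq_add_mul_I,
      Complex.normSq_add_mul_I, Complex.normSq_add_mul_I]
    push_cast
    ring

-- For `m = 0` the truncated exponent `m - 1` is harmless: its coefficient `m ^ 2` vanishes.
noncomputable def vortexEnergyDensity (c γ : ℝ) (m : ℕ) (r : ℝ) : ℝ :=
  c ^ 2 * exp (-γ * r ^ 2) *
    (2 * m ^ 2 * (r ^ 2) ^ (m - 1) - 2 * γ * m * (r ^ 2) ^ m + γ ^ 2 * (r ^ 2) ^ (m + 1))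

lemma norm_fderiv_vortex_sq_add_norm_fderiv_vortex_sq (c γ : ℝ) (m : ℕ) (x : ℝ²) :
    ‖fderiv ℝ (vortex c γ m) x (EuclideanSpace.single 0 1)‖ ^ 2 +
      ‖fderiv ℝ (vortex c γ m) x (EuclideanSpace.single 1 1)‖ ^ 2 =
    vortexEnergyDensity c γ m ‖x‖ := by
  set z : ℂ := x 0 + x 1 * Complex.I
  set e : ℂ := Complex.exp (-γ / 2 * ‖x‖ ^ 2 : ℝ)
  have hpartial₀ : fderiv ℝ (vortex c γ m) x (EuclideanSpace.single 0 1) =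
      c * (m * z ^ (m - 1) - γ * x 0 * z ^ m) * e := by
    simp [fderiv_vortex_apply, EuclideanSpace.inner_single_right, z, e]
  have hpartial₁ : fderiv ℝ (vortex c γ m) x (EuclideanSpace.single 1 1) =
      c * (m * z ^ (m - 1) * Complex.I - γ * x 1 * z ^ m) * e := by
    simp [fderiv_vortex_apply, EuclideanSpace.inner_single_right, z, e]
  have he : ‖e‖ ^ 2 = exp (-γ * ‖x‖ ^ 2) := by
    rw [Complex.norm_exp_ofReal, ← exp_nat_mul]; ring_nf
  simp only [hpartial₀, hpartial₁, norm_mul, mul_pow, he, Complex.sq_norm, Complex.normSq_ofReal]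
  rw [vortexEnergyDensity, norm_sq_eq_fin_two]
  linear_combination c ^ 2 * exp (-γ * (x 0 ^ 2 + x 1 ^ 2)) *
    normSq_add_normSq_vortex_factor γ (x 0) (x 1) m

lemma integral_Ioi_mul_vortexEnergyDensity (c : ℝ) {γ : ℝ} (hγ : 0 < γ) (m : ℕ) :
    ∫ r in Ioi (0 : ℝ), r * vortexEnergyDensity c γ m r = c ^ 2 * (m + 1)! / (2 * γ ^ m) := by
  have hsplit : (fun r => r * vortexEnergyDensity c γ m r) = fun r =>
      c ^ 2 * (2 * m ^ 2) * (r ^ (2 * (m - 1) + 1) * exp (-γ * r ^ 2)) -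
        c ^ 2 * (2 * γ * m) * (r ^ (2 * m + 1) * exp (-γ * r ^ 2)) +
        c ^ 2 * γ ^ 2 * (r ^ (2 * (m + 1) + 1) * exp (-γ * r ^ 2)) := by
    ext r
    simp only [vortexEnergyDensity, ← pow_mul]
    ring
  have hM (k : ℕ) := (integrableOn_Ioi_pow_mul_exp_neg_mul_sq hγ (2 * k + 1)).const_mul
  rw [hsplit, integral_add (f := fun r => _ - _) ((hM _ _).sub (hM _ _)) (hM _ _),
    integral_sub (hM _ _) (hM _ _)]
  simp only [integral_const_mul, integral_Ioi_odd_pow_mul_exp_neg_mul_sq hγ]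
  have hγ' := hγ.ne'
  rcases m with _ | n
  · norm_num
    field_simp
  · simp only [Nat.add_sub_cancel, Nat.factorial_succ]
    push_cast
    field_simp
    ring

/-- the kinetic energy of the 2D vortex function `ψ_m` equals `(m+1)·γ`. -/
theorem vortex_kinetic_energy
    (γ : ℝ) (hγ : 0 < γ) (m : ℕ)
    (ψ : EuclideanSpace ℝ (Fin 2) → ℂ)
    (hψ : ∀ x : EuclideanSpace ℝ (Fin 2),
      ψ x = ((γ ^ (((m : ℝ) + 1) / 2) / Real.sqrt (Real.pi * m.factorial) : ℝ) : ℂ) *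
        ((x 0 : ℂ) + Complex.I * (x 1 : ℂ)) ^ m *
        Complex.exp (((-(γ * ((x 0) ^ 2 + (x 1) ^ 2)) / 2 : ℝ) : ℂ))) :
    (∫ x : EuclideanSpace ℝ (Fin 2),
        (‖fderiv ℝ ψ x (EuclideanSpace.single 0 1)‖ ^ 2 +
         ‖fderiv ℝ ψ x (EuclideanSpace.single 1 1)‖ ^ 2)) = ((m : ℝ) + 1) * γ := by
  set c := γ ^ (((m : ℝ) + 1) / 2) / √(π * m !)
  have hc : c ^ 2 = γ ^ (m + 1) / (π * m !) := by
    rw [div_pow, sq_sqrt (by positivity), ← rpow_natCast, ← rpow_mul hγ.le]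
    norm_num [← rpow_natCast]
  have hψ_eq : ψ = vortex c γ m := by
    ext x
    rw [hψ, vortex, complexCoord_apply, norm_sq_eq_fin_two, mul_comm Complex.I]
    ring_nf
  simp only [hψ_eq, norm_fderiv_vortex_sq_add_norm_fderiv_vortex_sq]
  rw [integral_fun_norm_euclideanSpace_fin_two, integral_Ioi_mul_vortexEnergyDensity c hγ, hc,
    Nat.factorial_succ]
  field_simp
  push_cast
  ring
end

section
/- Let γ > 0 and p > 1, and for each m ∈ ℕ define ψ_m : ℝ² → ℂ by ψ_m(x₁,x₂) = (γ^((m+1)/2)/√(π·m!))·(x₁ + i x₂)^m·exp(−γ(x₁²+x₂²)/2). Then the nonlinear energy integrals tend to zero: ∫_{ℝ²} |ψ_m(x)|^(p+1) dx → 0 as m → ∞. -/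
/-!
`|ψ_m|` is radial with `∫ |ψ_m|² = 1`, and its supremum satisfies
`sup |ψ_m|² = (γ / π) · m^m e^{-m} / m!`, which is `O(m^{-1/2})` by Stirling's formula.
Hence `∫ |ψ_m|^{p+1} ≤ (sup |ψ_m|)^{p-1} ∫ |ψ_m|² → 0`.
-/

open MeasureTheory Real Filter Topology
open scoped Nat

lemma pow_mul_exp_neg_le_pow_mul_exp_neg (m : ℕ) {t : ℝ} (ht : 0 ≤ t) :
    t ^ m * exp (-t) ≤ (m : ℝ) ^ m * exp (-m) := by
  rcases Nat.eq_zero_or_pos m with rfl | hm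
  · simpa using exp_le_one_iff.mpr (neg_nonpos.mpr ht)
  have hm' : (0 : ℝ) < m := Nat.cast_pos.mpr hm
  -- `x ≤ exp (x - 1)` at `x = t / m`, raised to the `m`-th power
  have ht_le : t ≤ m * exp (t / m - 1) := by
    have := add_one_le_exp (t / m - 1)
    calc t = m * (t / m) := by field_simp
      _ ≤ m * exp (t / m - 1) := by gcongr; linarith
  calc t ^ m * exp (-t) ≤ (m * exp (t / m - 1)) ^ m * exp (-t) := by gcongr
    _ = (m : ℝ) ^ m * exp (-m) := by
      rw [mul_pow, ← exp_nat_mul, mul_assoc, ← exp_add]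
      congr 2
      field_simp
      ring

lemma pow_mul_exp_neg_div_factorial_le {n : ℕ} (hn : n ≠ 0) :
    (n : ℝ) ^ n * exp (-n) / n ! ≤ (√(2 * π * n))⁻¹ := by
  have hsqrt : 0 < √(2 * π * n) := sqrt_pos.mpr (by positivity)
  rw [div_le_iff₀ (by positivity), ← div_eq_inv_mul, le_div_iff₀ hsqrt, mul_comm,
    exp_neg, ← div_eq_mul_inv, ← exp_one_pow, ← div_pow]
  exact Stirling.le_factorial_stirling n

lemma tendsto_pow_mul_exp_neg_div_factorial :
    Tendsto (fun n : ℕ => (n : ℝ) ^ n * exp (-n) / n !) atTop (𝓝 0) := by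
  have h_inv_sqrt : Tendsto (fun n : ℕ => (√(2 * π * n))⁻¹) atTop (𝓝 0) :=
    tendsto_inv_atTop_zero.comp <| tendsto_sqrt_atTop.comp <|
      tendsto_natCast_atTop_atTop.const_mul_atTop (by positivity)
  refine squeeze_zero' (Eventually.of_forall fun n => by positivity) ?_ h_inv_sqrt
  filter_upwards [eventually_ne_atTop 0] with n hn
  exact pow_mul_exp_neg_div_factorial_le hn

lemma integral_rpow_add_two_le {α : Type*} [MeasurableSpace α] {μ : Measure α} {f : α → ℝ}
    {M q : ℝ} (hf : 0 ≤ f) (hfM : ∀ x, f x ≤ M) (hq : 0 ≤ q)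
    (hint : Integrable (fun x => f x ^ 2) μ) :
    ∫ x, f x ^ (q + 2) ∂μ ≤ M ^ q * ∫ x, f x ^ 2 ∂μ := by
  rw [← integral_const_mul]
  refine integral_mono_of_nonneg (Eventually.of_forall fun x => rpow_nonneg (hf x) _)
    (hint.const_mul _) (Eventually.of_forall fun x => ?_)
  show f x ^ (q + 2) ≤ M ^ q * f x ^ 2
  rw [rpow_add' (hf x) (by linarith), rpow_two]
  exact mul_le_mul_of_nonneg_right (rpow_le_rpow (hf x) (hfM x) hq) (sq_nonneg _)

lemma integral_euclideanSpace_fin_two_eq_integral_complex {E : Type*} [NormedAddCommGroup E]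
    [NormedSpace ℝ E] (f : ℂ → E) :
    ∫ x : EuclideanSpace ℝ (Fin 2), f (x 0 + Complex.I * x 1) = ∫ z, f z := by
  simpa [mul_comm] using integral_comp Complex.orthonormalBasisOneI.repr.symm f

lemma integral_norm_pow_mul_exp_neg_mul_sq {b : ℝ} (hb : 0 < b) (m : ℕ) :
    ∫ z : ℂ, ‖z‖ ^ (2 * m) * exp (-(b * ‖z‖ ^ 2)) = π * m ! / b ^ (m + 1) := by
  have h := Complex.integral_rpow_mul_exp_neg_mul_rpow (p := 2) (q := (2 * m : ℕ)) one_le_two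
    (lt_of_lt_of_le (by norm_num) (Nat.cast_nonneg _)) hb
  simp only [rpow_natCast, rpow_two, neg_mul] at h
  rw [h, show (-((2 * m : ℕ) + 2 : ℝ) / 2) = -((m + 1 : ℕ) : ℝ) by push_cast; ring,
    show ((2 * m : ℕ) + 2 : ℝ) / 2 = m + 1 by push_cast; ring, Gamma_nat_eq_factorial,
    rpow_neg hb.le, rpow_natCast]
  field_simp

/-- The modulus `|ψ_m(x)|` of the vortex function, as a function of the radius `r = |x|`. -/
noncomputable def vortexProfile (γ : ℝ) (m : ℕ) (r : ℝ) : ℝ :=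
  γ ^ (((m : ℝ) + 1) / 2) / √(π * m !) * r ^ m * exp (-(γ * r ^ 2) / 2)

section vortexProfile

variable {γ : ℝ} (m : ℕ)

lemma norm_vortex_eq_vortexProfile (hγ : 0 ≤ γ) (a b : ℝ) :
    ‖((γ ^ (((m : ℝ) + 1) / 2) / √(π * m !) : ℝ) : ℂ) * ((a : ℂ) + Complex.I * b) ^ m *
        Complex.exp (((-(γ * (a ^ 2 + b ^ 2)) / 2 : ℝ) : ℂ))‖ =
      vortexProfile γ m ‖(a : ℂ) + Complex.I * b‖ := by
  have hnorm : a ^ 2 + b ^ 2 = ‖(a : ℂ) + Complex.I * b‖ ^ 2 := by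
    rw [mul_comm, Complex.sq_norm, Complex.normSq_add_mul_I]
  rw [hnorm, norm_mul, norm_mul, norm_pow, Complex.norm_real, Complex.norm_exp,
    Complex.ofReal_re, norm_of_nonneg (by positivity), vortexProfile]

lemma vortexProfile_nonneg (hγ : 0 ≤ γ) {r : ℝ} (hr : 0 ≤ r) : 0 ≤ vortexProfile γ m r := by
  unfold vortexProfile
  positivity

lemma vortexProfile_sq (hγ : 0 ≤ γ) (r : ℝ) :
    vortexProfile γ m r ^ 2 = γ ^ (m + 1) / (π * m !) * ((r ^ 2) ^ m * exp (-(γ * r ^ 2))) := by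
  have hγpow : (γ ^ (((m : ℝ) + 1) / 2)) ^ 2 = γ ^ (m + 1) := by
    rw [← rpow_natCast, ← rpow_mul hγ, ← rpow_natCast]
    push_cast
    ring_nf
  rw [vortexProfile, mul_pow, mul_pow, div_pow, hγpow, sq_sqrt (by positivity), ← exp_nat_mul,
    ← pow_mul, pow_mul']
  push_cast
  ring_nf

lemma integral_vortexProfile_sq (hγ : 0 < γ) : ∫ z : ℂ, vortexProfile γ m ‖z‖ ^ 2 = 1 := by
  simp_rw [vortexProfile_sq m hγ.le, ← pow_mul]
  rw [integral_const_mul, integral_norm_pow_mul_exp_neg_mul_sq hγ]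
  field_simp

lemma integrable_vortexProfile_sq (hγ : 0 < γ) :
    Integrable fun z : ℂ => vortexProfile γ m ‖z‖ ^ 2 :=
  .of_integral_ne_zero (by rw [integral_vortexProfile_sq m hγ]; exact one_ne_zero)

lemma vortexProfile_sq_le (hγ : 0 < γ) (r : ℝ) :
    vortexProfile γ m r ^ 2 ≤ γ / π * ((m : ℝ) ^ m * exp (-m) / m !) := by
  have key := pow_mul_exp_neg_le_pow_mul_exp_neg m (t := γ * r ^ 2) (by positivity)
  rw [mul_pow] at key
  rw [vortexProfile_sq m hγ.le]
  calc γ ^ (m + 1) / (π * m !) * ((r ^ 2) ^ m * exp (-(γ * r ^ 2)))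
      = γ / (π * m !) * (γ ^ m * (r ^ 2) ^ m * exp (-(γ * r ^ 2))) := by ring
    _ ≤ γ / (π * m !) * ((m : ℝ) ^ m * exp (-m)) := by gcongr
    _ = γ / π * ((m : ℝ) ^ m * exp (-m) / m !) := by ring

end vortexProfile

/-- the nonlinear energy integrals `∫ |ψ_m|^(p+1)` of the 2D vortex functions
tend to zero as `m → ∞`. -/
theorem vortex_nonlinear_energy_tendsto_zero
    (γ p : ℝ) (hγ : 0 < γ) (hp : 1 < p) :
    Filter.Tendsto
      (fun m : ℕ =>
        ∫ x : EuclideanSpace ℝ (Fin 2),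
          ‖((γ ^ (((m : ℝ) + 1) / 2) / Real.sqrt (Real.pi * m.factorial) : ℝ) : ℂ) *
              ((x 0 : ℂ) + Complex.I * (x 1 : ℂ)) ^ m *
              Complex.exp (((-(γ * ((x 0) ^ 2 + (x 1) ^ 2)) / 2 : ℝ) : ℂ))‖ ^ (p + 1))
      Filter.atTop (nhds 0) := by
  set S : ℕ → ℝ := fun m => γ / π * ((m : ℝ) ^ m * exp (-m) / m !)
  have hS : Tendsto (fun m => √(S m) ^ (p - 1)) atTop (𝓝 0) := by
    have := ((tendsto_pow_mul_exp_neg_div_factorial.const_mul (γ / π)).sqrt).rpow_const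
      (Or.inr (by linarith : 0 ≤ p - 1))
    simpa [zero_rpow (by linarith : p - 1 ≠ 0)] using this
  refine squeeze_zero (fun m => integral_nonneg fun x => by positivity) (fun m => ?_) hS
  simp_rw [norm_vortex_eq_vortexProfile m hγ.le]
  rw [integral_euclideanSpace_fin_two_eq_integral_complex
      (fun z => vortexProfile γ m ‖z‖ ^ (p + 1)),
    show p + 1 = (p - 1) + 2 by ring]
  calc ∫ z : ℂ, vortexProfile γ m ‖z‖ ^ (p - 1 + 2)
      ≤ √(S m) ^ (p - 1) * ∫ z : ℂ, vortexProfile γ m ‖z‖ ^ 2 :=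
        integral_rpow_add_two_le (fun z => vortexProfile_nonneg m hγ.le (norm_nonneg z))
          (fun z => (le_sqrt (vortexProfile_nonneg m hγ.le (norm_nonneg z)) (by positivity)).mpr
            (vortexProfile_sq_le m hγ _)) (by linarith) (integrable_vortexProfile_sq m hγ)
    _ = √(S m) ^ (p - 1) := by rw [integral_vortexProfile_sq m hγ, mul_one]
end

section
/- Let γ₁, γ₂, γ₃ > 0, m ∈ ℕ, and set C_m² = (√(γ₂γ₃)/π)·γ₁^(m+1/2)/Γ(m+1/2). Then ∫_{ℝ³} (1/2)(γ₁²x₁² + γ₂²x₂² + γ₃²x₃²)·C_m²·x₁^(2m)·exp(−(γ₁x₁² + γ₂x₂² + γ₃x₃²)) dx = γ₁·m/2 + (γ₁+γ₂+γ₃)/4. (This is the potential-energy identity ∫ V_γ |ψ_m|² = γ₁|m|/2 + (γ₁+γ₂+γ₃)/4 for the anisotropic 3D vortex trial functions.) -/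
open MeasureTheory Real

/-!
The weight `C_m² x₁^(2m) e^{-(γ₁x₁² + γ₂x₂² + γ₃x₃²)}` is a product of one-dimensional densities
`t^(2k) e^{-bt²}`, so by Fubini each term `γᵢ² xᵢ²` of the potential only changes the `i`-th
factor. The moments of such a density are `Γ(k + 1/2) / b^(k + 1/2)`, hence by
`Γ(s + 1) = s Γ(s)` multiplying it by `t²` rescales its mass by `(k + 1/2) / b`, and `C_m²` is the
reciprocal of the total mass. With `k = (m, 0, 0)` this gives
`(1/2) (γ₁ (m + 1/2) + γ₂/2 + γ₃/2)`.
-/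

section ProductDensity

variable {ι : Type*} [Fintype ι]

lemma sq_mul_prod_eq_prod_ite [DecidableEq ι] (f : ι → ℝ → ℝ) (i : ι) (y : ι → ℝ) :
    y i ^ 2 * ∏ j, f j (y j) = ∏ j, (if j = i then y j ^ 2 else 1) * f j (y j) := by
  rw [Finset.prod_mul_distrib, Finset.prod_ite_eq', if_pos (Finset.mem_univ i)]

lemma integrable_sq_mul_prod {f : ι → ℝ → ℝ} (hf : ∀ j, Integrable (f j))
    (hf₂ : ∀ j, Integrable fun t => t ^ 2 * f j t) (i : ι) :
    Integrable fun y : ι → ℝ => y i ^ 2 * ∏ j, f j (y j) := by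
  classical
  simp_rw [sq_mul_prod_eq_prod_ite f i]
  refine Integrable.fintype_prod (f := fun j t => (if j = i then t ^ 2 else 1) * f j t) fun j => ?_
  split_ifs
  · exact hf₂ j
  · simpa using hf j

lemma integral_sq_mul_prod {f : ι → ℝ → ℝ} {i : ι} {σ : ℝ}
    (hσ : ∫ t, t ^ 2 * f i t = σ * ∫ t, f i t) :
    ∫ y : ι → ℝ, y i ^ 2 * ∏ j, f j (y j) = σ * ∏ j, ∫ t, f j t := by
  classical
  have hfactor : ∀ j, ∫ t, (if j = i then t ^ 2 else 1) * f j t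
      = (if j = i then σ else 1) * ∫ t, f j t := by
    intro j
    split_ifs with hj
    · exact hj ▸ hσ
    · simp
  simp_rw [sq_mul_prod_eq_prod_ite f i]
  rw [integral_fintype_prod_volume_eq_prod (fun j t => (if j = i then t ^ 2 else 1) * f j t)]
  simp_rw [hfactor, Finset.prod_mul_distrib, Finset.prod_ite_eq', if_pos (Finset.mem_univ i)]

lemma integral_sum_mul_sq_mul_prod {f : ι → ℝ → ℝ} (c σ : ι → ℝ) (hf : ∀ j, Integrable (f j))
    (hf₂ : ∀ j, Integrable fun t => t ^ 2 * f j t)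
    (hσ : ∀ i, ∫ t, t ^ 2 * f i t = σ i * ∫ t, f i t) :
    ∫ y : ι → ℝ, (∑ i, c i * y i ^ 2) * ∏ j, f j (y j)
      = (∑ i, c i * σ i) * ∏ j, ∫ t, f j t := by
  simp_rw [Finset.sum_mul, mul_assoc]
  rw [integral_finsetSum _ fun i _ => (integrable_sq_mul_prod hf hf₂ i).const_mul (c i)]
  simp_rw [integral_const_mul, integral_sq_mul_prod (hσ _)]

end ProductDensity

section GaussianMoments

variable {b : ℝ}

lemma integrable_pow_mul_exp_neg_mul_sq (hb : 0 < b) (k : ℕ) :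
    Integrable fun x : ℝ => x ^ k * exp (-b * x ^ 2) := by
  simpa [rpow_natCast] using
    integrable_rpow_mul_exp_neg_mul_sq hb (s := k) (neg_one_lt_zero.trans_le k.cast_nonneg)

lemma integral_pow_two_mul_mul_exp_neg_mul_sq (hb : 0 < b) (n : ℕ) :
    ∫ x : ℝ, x ^ (2 * n) * exp (-b * x ^ 2) = Gamma (n + 1 / 2) / b ^ ((n : ℝ) + 1 / 2) := by
  have heven : (fun x : ℝ => x ^ (2 * n) * exp (-b * x ^ 2))
      = fun x => |x| ^ ((2 * n : ℕ) : ℝ) * exp (-b * |x| ^ (2 : ℝ)) := by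
    ext x
    rw [rpow_natCast, rpow_two, sq_abs, (even_two_mul n).pow_abs]
  rw [heven, integral_comp_abs (f := fun x => x ^ ((2 * n : ℕ) : ℝ) * exp (-b * x ^ (2 : ℝ))),
    integral_rpow_mul_exp_neg_mul_rpow two_pos
      (neg_one_lt_zero.trans_le (Nat.cast_nonneg _)) hb]
  have hexp : -(((2 * n : ℕ) : ℝ) + 1) / 2 = -((n : ℝ) + 1 / 2) := by push_cast; ring
  have harg : (((2 * n : ℕ) : ℝ) + 1) / 2 = (n : ℝ) + 1 / 2 := by push_cast; ring
  rw [hexp, harg, rpow_neg hb.le]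
  field_simp

lemma integral_sq_mul_pow_two_mul_mul_exp_neg_mul_sq (hb : 0 < b) (n : ℕ) :
    ∫ x : ℝ, x ^ 2 * (x ^ (2 * n) * exp (-b * x ^ 2))
      = ((n + 1 / 2) / b) * ∫ x : ℝ, x ^ (2 * n) * exp (-b * x ^ 2) := by
  have hpow : ∀ x : ℝ, x ^ 2 * (x ^ (2 * n) * exp (-b * x ^ 2))
      = x ^ (2 * (n + 1)) * exp (-b * x ^ 2) := fun x => by ring
  simp_rw [hpow, integral_pow_two_mul_mul_exp_neg_mul_sq hb]
  rw [Nat.cast_succ, add_right_comm, Gamma_add_one (by positivity), rpow_add_one hb.ne']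
  field_simp

end GaussianMoments

lemma integral_sum_mul_sq_mul_prod_gaussian {ι : Type*} [Fintype ι]
    {b : ι → ℝ} (hb : ∀ j, 0 < b j) (k : ι → ℕ) (c : ι → ℝ) :
    ∫ y : ι → ℝ, (∑ i, c i * y i ^ 2) * ∏ j, (y j ^ (2 * k j) * exp (-b j * y j ^ 2))
      = (∑ i, c i * ((k i + 1 / 2) / b i))
        * ∏ j, Gamma (k j + 1 / 2) / b j ^ ((k j : ℝ) + 1 / 2) := by
  rw [integral_sum_mul_sq_mul_prod c _
    (fun j => integrable_pow_mul_exp_neg_mul_sq (hb j) _)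
    (fun j => by simpa only [← mul_assoc, ← pow_add] using
      integrable_pow_mul_exp_neg_mul_sq (hb j) (2 + 2 * k j))
    (fun i => integral_sq_mul_pow_two_mul_mul_exp_neg_mul_sq (hb i) (k i))]
  simp_rw [integral_pow_two_mul_mul_exp_neg_mul_sq (hb _)]

/-- potential-energy identity `∫ V_γ |ψ_m|² = γ₁·m/2 + (γ₁+γ₂+γ₃)/4`
for the anisotropic 3D vortex trial functions. -/
theorem anisotropic_vortex_potential_energy
    (γ₁ γ₂ γ₃ : ℝ) (h₁ : 0 < γ₁) (h₂ : 0 < γ₂) (h₃ : 0 < γ₃) (m : ℕ) :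
    (∫ x : EuclideanSpace ℝ (Fin 3),
        (1 / 2) * (γ₁ ^ 2 * (x 0) ^ 2 + γ₂ ^ 2 * (x 1) ^ 2 + γ₃ ^ 2 * (x 2) ^ 2) *
          ((Real.sqrt (γ₂ * γ₃) / Real.pi * γ₁ ^ ((m : ℝ) + 1 / 2) /
              Real.Gamma ((m : ℝ) + 1 / 2)) *
            (x 0) ^ (2 * m) *
            Real.exp (-(γ₁ * (x 0) ^ 2 + γ₂ * (x 1) ^ 2 + γ₃ * (x 2) ^ 2)))) =
      γ₁ * m / 2 + (γ₁ + γ₂ + γ₃) / 4 := by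
  set C := √(γ₂ * γ₃) / π * γ₁ ^ ((m : ℝ) + 1 / 2) / Gamma ((m : ℝ) + 1 / 2)
  have hb : ∀ j : Fin 3, 0 < ![γ₁, γ₂, γ₃] j := by simp [Fin.forall_fin_succ, h₁, h₂, h₃]
  have hseparate : ∀ y : Fin 3 → ℝ,
      1 / 2 * (γ₁ ^ 2 * y 0 ^ 2 + γ₂ ^ 2 * y 1 ^ 2 + γ₃ ^ 2 * y 2 ^ 2) *
        (C * y 0 ^ (2 * m) * exp (-(γ₁ * y 0 ^ 2 + γ₂ * y 1 ^ 2 + γ₃ * y 2 ^ 2)))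
      = C * ((∑ i, ![γ₁ ^ 2 / 2, γ₂ ^ 2 / 2, γ₃ ^ 2 / 2] i * y i ^ 2)
        * ∏ j, (y j ^ (2 * ![m, 0, 0] j) * exp (-![γ₁, γ₂, γ₃] j * y j ^ 2))) := by
    intro y
    simp only [Fin.sum_univ_three, Fin.prod_univ_three, Matrix.cons_val, neg_add, exp_add,
      neg_mul, mul_zero, pow_zero, one_mul]
    ring
  have hnorm : C * (Gamma (m + 1 / 2) / γ₁ ^ ((m : ℝ) + 1 / 2)
      * (√π / γ₂ ^ (1 / 2 : ℝ)) * (√π / γ₃ ^ (1 / 2 : ℝ))) = 1 := by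
    have hG : 0 < Gamma ((m : ℝ) + 1 / 2) := Gamma_pos_of_pos (by positivity)
    simp only [C]
    rw [← sqrt_eq_rpow, ← sqrt_eq_rpow, sqrt_mul h₂.le]
    field_simp
    rw [sq_sqrt pi_pos.le]
  rw [← (EuclideanSpace.volume_preserving_symm_measurableEquiv_toLp (Fin 3)).symm.integral_comp']
  simp only [MeasurableEquiv.symm_symm, MeasurableEquiv.coe_toLp, WithLp.ofLp_toLp, hseparate]
  rw [integral_const_mul, integral_sum_mul_sq_mul_prod_gaussian hb]
  simp only [Fin.sum_univ_three, Fin.prod_univ_three, Matrix.cons_val, Nat.cast_zero, zero_add,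
    Gamma_one_half_eq]
  rw [mul_left_comm, hnorm, mul_one]
  field_simp
  ring
end

section
/- Let γ₁, γ₂, β > 0, m ∈ ℕ, and define φ_m : ℝ³ → ℝ by φ_m(x) = C_m·x₃^m·exp(−(γ₁x₁² + γ₂x₂² + βx₃²)/2), where C_m² = (√(γ₁γ₂)/π)·β^(m+1/2)/Γ(m+1/2). Then for the partially repulsive potential V(x) = (1/2)(γ₁²x₁² + γ₂²x₂² − β²x₃²) one has ∫_{ℝ³} V(x)·φ_m(x)² dx = −β·m/2 + (γ₁+γ₂−β)/4. In particular this potential energy tends to −∞ linearly in m. -/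
/-!
Up to the factor `C_m²`, `φ_m²` is a product of the one-dimensional weights `t^(2k) e^(-b t²)`
with `(k, b) = (0, γ₁), (0, γ₂), (m, β)`, so by Fubini every term of `∫ V φ_m²` is a product of
the moments `∫ t^(2k) e^(-b t²) = Γ(k + 1/2) / b^(k + 1/2)`. Multiplying a weight by `t²` raises
`k` by one, which multiplies its moment by `(k + 1/2) / b`; hence `∫ x_i² φ_m² = (k_i + 1/2) / b_i`
by the normalisation `∫ φ_m² = 1`, and the energy is
`γ₁² / (4 γ₁) + γ₂² / (4 γ₂) - β² (m + 1/2) / (2 β)`.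
-/

open MeasureTheory Real

section

variable {ι 𝕜 : Type*} [Fintype ι] [RCLike 𝕜]

theorem EuclideanSpace.integral_prod_eq_prod (f : ι → ℝ → 𝕜) :
    ∫ x : EuclideanSpace ℝ ι, ∏ i, f i (x i) = ∏ i, ∫ t, f i t := by
  rw [← (EuclideanSpace.volume_preserving_symm_measurableEquiv_toLp ι).symm.integral_comp']
  exact integral_fintype_prod_volume_eq_prod _

theorem EuclideanSpace.integrable_prod {f : ι → ℝ → 𝕜} (hf : ∀ i, Integrable (f i)) :
    Integrable fun x : EuclideanSpace ℝ ι => ∏ i, f i (x i) := by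
  rw [← (EuclideanSpace.volume_preserving_symm_measurableEquiv_toLp ι).symm.integrable_comp_emb
    (MeasurableEquiv.measurableEmbedding _)]
  exact Integrable.fintype_prod hf

theorem EuclideanSpace.integral_fin_three_mul (f g h : ℝ → 𝕜) :
    ∫ x : EuclideanSpace ℝ (Fin 3), f (x 0) * g (x 1) * h (x 2)
      = (∫ t, f t) * (∫ t, g t) * ∫ t, h t := by
  simpa [Fin.prod_univ_three] using EuclideanSpace.integral_prod_eq_prod ![f, g, h]

theorem EuclideanSpace.integrable_fin_three_mul {f g h : ℝ → 𝕜} (hf : Integrable f)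
    (hg : Integrable g) (hh : Integrable h) :
    Integrable fun x : EuclideanSpace ℝ (Fin 3) => f (x 0) * g (x 1) * h (x 2) := by
  simpa [Fin.prod_univ_three] using
    EuclideanSpace.integrable_prod (f := ![f, g, h]) (by simp [Fin.forall_fin_succ, *])

end

noncomputable def gaussianWeight (b : ℝ) (k : ℕ) (t : ℝ) : ℝ := t ^ (2 * k) * exp (-b * t ^ 2)

section

variable {b : ℝ}

theorem integrable_gaussianWeight (hb : 0 < b) (k : ℕ) : Integrable (gaussianWeight b k) := by
  unfold gaussianWeight
  simpa only [Real.rpow_natCast] using integrable_rpow_mul_exp_neg_mul_sq hb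
    (s := ((2 * k : ℕ) : ℝ)) (neg_one_lt_zero.trans_le (Nat.cast_nonneg _))

theorem integral_gaussianWeight (hb : 0 < b) (k : ℕ) :
    ∫ t, gaussianWeight b k t = Gamma (k + 1 / 2) / b ^ ((k : ℝ) + 1 / 2) := by
  have h_even : ∀ t, gaussianWeight b k t = gaussianWeight b k |t| := fun t => by
    rw [gaussianWeight, gaussianWeight, pow_abs, abs_of_nonneg ((even_two_mul k).pow_nonneg t),
      sq_abs]
  have h_rpow : ∀ t, gaussianWeight b k t = t ^ ((2 * k : ℕ) : ℝ) * exp (-b * t ^ (2 : ℝ)) :=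
    fun t => by rw [gaussianWeight, Real.rpow_natCast, Real.rpow_two]
  rw [funext h_even, integral_comp_abs, funext h_rpow,
    integral_rpow_mul_exp_neg_mul_rpow two_pos (neg_one_lt_zero.trans_le (Nat.cast_nonneg _)) hb,
    show -(((2 * k : ℕ) : ℝ) + 1) / 2 = -(k + 1 / 2) by push_cast; ring, Real.rpow_neg hb.le,
    show (((2 * k : ℕ) : ℝ) + 1) / 2 = k + 1 / 2 by push_cast; ring]
  field_simp

theorem integral_gaussianWeight_zero (b : ℝ) : ∫ t, gaussianWeight b 0 t = √(π / b) := by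
  simpa [gaussianWeight] using integral_gaussian b

theorem integral_gaussianWeight_succ (hb : 0 < b) (k : ℕ) :
    ∫ t, gaussianWeight b (k + 1) t = (k + 1 / 2) / b * ∫ t, gaussianWeight b k t := by
  rw [integral_gaussianWeight hb, integral_gaussianWeight hb, Nat.cast_succ, add_right_comm,
    Gamma_add_one (by positivity), Real.rpow_add_one hb.ne']
  field_simp

end

theorem trialConst_sq_mul_integral_gaussianWeights {γ₁ γ₂ β Cm : ℝ} (h₁ : 0 < γ₁) (h₂ : 0 < γ₂)
    (hβ : 0 < β) (m : ℕ)
    (hCm : Cm ^ 2 = √(γ₁ * γ₂) / π * β ^ ((m : ℝ) + 1 / 2) / Gamma ((m : ℝ) + 1 / 2)) :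
    Cm ^ 2 * ((∫ t, gaussianWeight γ₁ 0 t) * (∫ t, gaussianWeight γ₂ 0 t) *
      ∫ t, gaussianWeight β m t) = 1 := by
  have h_sqrt : √(π / γ₁) * √(π / γ₂) * √(γ₁ * γ₂) = π := by
    rw [← Real.sqrt_mul (by positivity), ← Real.sqrt_mul (by positivity),
      show π / γ₁ * (π / γ₂) * (γ₁ * γ₂) = π ^ 2 by field_simp, Real.sqrt_sq pi_pos.le]
  have hΓ : 0 < Gamma ((m : ℝ) + 1 / 2) := Gamma_pos_of_pos (by positivity)
  rw [integral_gaussianWeight_zero, integral_gaussianWeight_zero, integral_gaussianWeight hβ, hCm]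
  field_simp
  linear_combination h_sqrt

theorem repulsive_potential_mul_trial_sq (γ₁ γ₂ β Cm : ℝ) (m : ℕ) (x : EuclideanSpace ℝ (Fin 3)) :
    (1 / 2) * (γ₁ ^ 2 * (x 0) ^ 2 + γ₂ ^ 2 * (x 1) ^ 2 - β ^ 2 * (x 2) ^ 2) *
        (Cm * (x 2) ^ m * exp (-(γ₁ * (x 0) ^ 2 + γ₂ * (x 1) ^ 2 + β * (x 2) ^ 2) / 2)) ^ 2
      = Cm ^ 2 / 2 *
        (γ₁ ^ 2 * (gaussianWeight γ₁ 1 (x 0) * gaussianWeight γ₂ 0 (x 1) * gaussianWeight β m (x 2))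
          + γ₂ ^ 2 * (gaussianWeight γ₁ 0 (x 0) * gaussianWeight γ₂ 1 (x 1) * gaussianWeight β m (x 2))
          - β ^ 2 * (gaussianWeight γ₁ 0 (x 0) * gaussianWeight γ₂ 0 (x 1) *
              gaussianWeight β (m + 1) (x 2))) := by
  have h_exp : exp (-(γ₁ * (x 0) ^ 2 + γ₂ * (x 1) ^ 2 + β * (x 2) ^ 2) / 2) ^ 2
      = exp (-γ₁ * (x 0) ^ 2) * exp (-γ₂ * (x 1) ^ 2) * exp (-β * (x 2) ^ 2) := by
    rw [← exp_nat_mul, ← exp_add, ← exp_add]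
    ring_nf
  simp only [gaussianWeight, mul_pow, h_exp]
  ring

/-- for the partially repulsive potential
`V(x) = (1/2)(γ₁²x₁² + γ₂²x₂² − β²x₃²)` and the trial functions
`φ_m(x) = C_m x₃^m e^{-(γ₁x₁²+γ₂x₂²+βx₃²)/2}` one has
`∫ V φ_m² = −β·m/2 + (γ₁+γ₂−β)/4`. -/
theorem repulsive_trial_potential_energy
    (γ₁ γ₂ β : ℝ) (h₁ : 0 < γ₁) (h₂ : 0 < γ₂) (hβ : 0 < β) (m : ℕ)
    (Cm : ℝ)
    (hCm : Cm ^ 2 = Real.sqrt (γ₁ * γ₂) / Real.pi * β ^ ((m : ℝ) + 1 / 2) /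
      Real.Gamma ((m : ℝ) + 1 / 2))
    (φ : EuclideanSpace ℝ (Fin 3) → ℝ)
    (hφ : ∀ x : EuclideanSpace ℝ (Fin 3),
      φ x = Cm * (x 2) ^ m *
        Real.exp (-(γ₁ * (x 0) ^ 2 + γ₂ * (x 1) ^ 2 + β * (x 2) ^ 2) / 2)) :
    (∫ x : EuclideanSpace ℝ (Fin 3),
        (1 / 2) * (γ₁ ^ 2 * (x 0) ^ 2 + γ₂ ^ 2 * (x 1) ^ 2 - β ^ 2 * (x 2) ^ 2) *
          (φ x) ^ 2) = -β * m / 2 + (γ₁ + γ₂ - β) / 4 := by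
  have hW (a b c : ℕ) : Integrable fun x : EuclideanSpace ℝ (Fin 3) =>
      gaussianWeight γ₁ a (x 0) * gaussianWeight γ₂ b (x 1) * gaussianWeight β c (x 2) :=
    EuclideanSpace.integrable_fin_three_mul (integrable_gaussianWeight h₁ a)
      (integrable_gaussianWeight h₂ b) (integrable_gaussianWeight hβ c)
  simp_rw [hφ, repulsive_potential_mul_trial_sq]
  rw [integral_const_mul, integral_sub _ ((hW 0 0 (m + 1)).const_mul _),
    integral_add ((hW 1 0 m).const_mul _) ((hW 0 1 m).const_mul _)]
  · simp only [integral_const_mul, EuclideanSpace.integral_fin_three_mul]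
    rw [integral_gaussianWeight_succ h₁, integral_gaussianWeight_succ h₂,
      integral_gaussianWeight_succ hβ]
    have h_norm := trialConst_sq_mul_integral_gaussianWeights h₁ h₂ hβ m hCm
    field_simp
    linear_combination (4 * γ₁ + 4 * γ₂ - 4 * β - 8 * β * m) * h_norm
  · exact ((hW 1 0 m).const_mul _).add ((hW 0 1 m).const_mul _)
end

section
/- (Pointwise diamagnetic inequality.) Let d ≥ 1, let u : ℝ^d → ℂ be differentiable at a point x₀ with u(x₀) ≠ 0, and let a ∈ ℝ^d. Then the function x ↦ |u(x)| is differentiable at x₀ and for every coordinate index j one has | ∂ⱼ|u|(x₀) | ≤ | ∂ⱼu(x₀) − i·aⱼ·u(x₀) |. Consequently Σⱼ (∂ⱼ|u|(x₀))² ≤ Σⱼ |∂ⱼu(x₀) − i·aⱼ·u(x₀)|², i.e. the Euclidean norm of the gradient of |u| at x₀ is bounded by the Euclidean norm of the covariant gradient (∇ − ia)u at x₀. -/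
/-!
Away from the zeros of `u`, the derivative of `|u| = √(|u|²)` in direction `v` is
`⟪u, ∂ᵥu⟫ / |u|`, a real inner product in `ℂ ≅ ℝ²`. Since `i aⱼ u(x₀)` is orthogonal to `u(x₀)`,
subtracting it does not change this inner product, and Cauchy–Schwarz bounds the result by
`|∂ⱼu(x₀) − i aⱼ u(x₀)|`.
-/

open scoped RealInnerProductSpace

section NormDeriv

variable {G F : Type*} [NormedAddCommGroup G] [NormedSpace ℝ G]
  [NormedAddCommGroup F] [InnerProductSpace ℝ F]

theorem hasStrictFDerivAt_norm_of_ne_zero {x : F} (hx : x ≠ 0) :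
    HasStrictFDerivAt (‖·‖) (‖x‖⁻¹ • innerSL ℝ x) x := by
  have hsq : ‖x‖ ^ 2 ≠ 0 := by positivity
  convert (hasStrictFDerivAt_norm_sq x).sqrt hsq using 1
  · simp [Real.sqrt_sq (norm_nonneg _)]
  · ext y
    simp only [smul_apply, coe_innerSL_apply, smul_eq_mul,
      Real.sqrt_sq (norm_nonneg _), one_div, mul_inv_rev, nsmul_eq_mul, Nat.cast_ofNat]
    field_simp

theorem HasFDerivAt.norm {f : G → F} {f' : G →L[ℝ] F} {x : G} (hf : HasFDerivAt f f' x)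
    (h0 : f x ≠ 0) :
    HasFDerivAt (‖f ·‖) ((‖f x‖⁻¹ • innerSL ℝ (f x)).comp f') x :=
  (hasStrictFDerivAt_norm_of_ne_zero h0).hasFDerivAt.comp x hf

end NormDeriv

theorem abs_inv_norm_mul_inner_le_norm_sub {F : Type*} [NormedAddCommGroup F]
    [InnerProductSpace ℝ F] {z v : F} (hv : ⟪z, v⟫ = 0) (w : F) :
    |‖z‖⁻¹ * ⟪z, w⟫| ≤ ‖w - v‖ := by
  rcases eq_or_ne z 0 with rfl | hz
  · simp
  have hz' : 0 < ‖z‖ := norm_pos_iff.2 hz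
  rw [← sub_zero ⟪z, w⟫, ← hv, ← inner_sub_right, abs_mul, abs_inv, abs_norm,
    inv_mul_le_iff₀ hz']
  exact abs_real_inner_le_norm _ _

theorem Complex.real_inner_I_mul_ofReal_mul_self (z : ℂ) (t : ℝ) :
    ⟪z, Complex.I * t * z⟫ = 0 := by
  simp only [Complex.inner, Complex.mul_re, Complex.mul_im, Complex.I_re, Complex.I_im,
    Complex.ofReal_re, Complex.ofReal_im, Complex.conj_re, Complex.conj_im]
  ring

theorem pointwise_diamagnetic_inequality_general
    (d : ℕ)
    (u : EuclideanSpace ℝ (Fin d) → ℂ) (x₀ : EuclideanSpace ℝ (Fin d))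
    (hu : DifferentiableAt ℝ u x₀) (hu0 : u x₀ ≠ 0)
    (a : EuclideanSpace ℝ (Fin d)) :
    DifferentiableAt ℝ (fun x => ‖u x‖) x₀ ∧
    (∀ j : Fin d,
      |fderiv ℝ (fun x => ‖u x‖) x₀ (EuclideanSpace.single j 1)| ≤
        ‖fderiv ℝ u x₀ (EuclideanSpace.single j 1) - Complex.I * (a j : ℂ) * u x₀‖) ∧
    (∑ j : Fin d, (fderiv ℝ (fun x => ‖u x‖) x₀ (EuclideanSpace.single j 1)) ^ 2) ≤
      (∑ j : Fin d,
        ‖fderiv ℝ u x₀ (EuclideanSpace.single j 1) - Complex.I * (a j : ℂ) * u x₀‖ ^ 2) := by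
  have hD := hu.hasFDerivAt.norm hu0
  have hj : ∀ j : Fin d,
      |fderiv ℝ (fun x => ‖u x‖) x₀ (EuclideanSpace.single j 1)| ≤
        ‖fderiv ℝ u x₀ (EuclideanSpace.single j 1) - Complex.I * (a j : ℂ) * u x₀‖ := fun j => by
    rw [hD.fderiv]
    exact abs_inv_norm_mul_inner_le_norm_sub
      (Complex.real_inner_I_mul_ofReal_mul_self (u x₀) (a j)) _
  refine ⟨hD.differentiableAt, hj, Finset.sum_le_sum fun j _ => ?_⟩
  exact sq_le_sq.2 ((hj j).trans_eq (abs_norm _).symm)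

/-- pointwise diamagnetic inequality. If `u` is differentiable at `x₀`
with `u x₀ ≠ 0` and `a ∈ ℝ^d`, then `|u|` is differentiable at `x₀` with
`|∂ⱼ|u|(x₀)| ≤ |∂ⱼu(x₀) − i aⱼ u(x₀)|` for every `j`, and consequently the Euclidean
norm of `∇|u|(x₀)` is bounded by that of the covariant gradient `(∇ − ia)u(x₀)`. -/
theorem pointwise_diamagnetic_inequality
    (d : ℕ) (hd : 1 ≤ d)
    (u : EuclideanSpace ℝ (Fin d) → ℂ) (x₀ : EuclideanSpace ℝ (Fin d))
    (hu : DifferentiableAt ℝ u x₀) (hu0 : u x₀ ≠ 0)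
    (a : EuclideanSpace ℝ (Fin d)) :
    DifferentiableAt ℝ (fun x => ‖u x‖) x₀ ∧
    (∀ j : Fin d,
      |fderiv ℝ (fun x => ‖u x‖) x₀ (EuclideanSpace.single j 1)| ≤
        ‖fderiv ℝ u x₀ (EuclideanSpace.single j 1) - Complex.I * (a j : ℂ) * u x₀‖) ∧
    (∑ j : Fin d, (fderiv ℝ (fun x => ‖u x‖) x₀ (EuclideanSpace.single j 1)) ^ 2) ≤
      (∑ j : Fin d,
        ‖fderiv ℝ u x₀ (EuclideanSpace.single j 1) - Complex.I * (a j : ℂ) * u x₀‖ ^ 2) :=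
  pointwise_diamagnetic_inequality_general d u x₀ hu hu0 a
end

section
/- Let d ≥ 1, α₀ > 0, let A : ℝ^d → ℝ^d and V : ℝ^d → ℝ be measurable functions with ‖A(x)‖² ≤ α₀²·(|V(x)| + 1) for every x ∈ ℝ^d. Then for every differentiable u : ℝ^d → ℂ the following inequality of (possibly infinite) integrals of nonnegative functions holds: ∫_{ℝ^d} ( Σⱼ|∂ⱼu|² + (1 + ‖A(x)‖² + |V(x)|)·|u|² ) dx ≤ (2 + 3α₀²) · ∫_{ℝ^d} ( Σⱼ|∂ⱼu − i·Aⱼ(x)·u|² + |V(x)|·|u|² + |u|² ) dx. (This is one half of the norm equivalence ‖·‖_Σ ≈ ‖·‖_{Σ_{A,V}} between the weighted Sobolev norm and the magnetic Sobolev norm.) -/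
open MeasureTheory

/-- one half of the norm equivalence `‖·‖_Σ ≈ ‖·‖_{Σ_{A,V}}`. If
`‖A(x)‖² ≤ α₀²(|V(x)| + 1)` pointwise, then the weighted Sobolev integrand is
controlled by `(2 + 3α₀²)` times the magnetic Sobolev integrand, as an inequality
of (possibly infinite) lower integrals. -/
theorem weighted_le_magnetic_sobolev
    (d : ℕ) (hd : 1 ≤ d) (α₀ : ℝ) (hα : 0 < α₀)
    (A : EuclideanSpace ℝ (Fin d) → EuclideanSpace ℝ (Fin d)) (hAm : Measurable A)
    (V : EuclideanSpace ℝ (Fin d) → ℝ) (hVm : Measurable V)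
    (hAV : ∀ x : EuclideanSpace ℝ (Fin d), ‖A x‖ ^ 2 ≤ α₀ ^ 2 * (|V x| + 1))
    (u : EuclideanSpace ℝ (Fin d) → ℂ) (hu : Differentiable ℝ u) :
    (∫⁻ x : EuclideanSpace ℝ (Fin d),
        ENNReal.ofReal
          ((∑ j : Fin d, ‖fderiv ℝ u x (EuclideanSpace.single j 1)‖ ^ 2) +
            (1 + ‖A x‖ ^ 2 + |V x|) * ‖u x‖ ^ 2)) ≤
      ENNReal.ofReal (2 + 3 * α₀ ^ 2) *
        ∫⁻ x : EuclideanSpace ℝ (Fin d),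
          ENNReal.ofReal
            ((∑ j : Fin d,
                ‖fderiv ℝ u x (EuclideanSpace.single j 1) -
                  Complex.I * (A x j : ℂ) * u x‖ ^ 2) +
              |V x| * ‖u x‖ ^ 2 + ‖u x‖ ^ 2) := by
  rw [← MeasureTheory.lintegral_const_mul' _ _ ENNReal.ofReal_ne_top]
  apply lintegral_mono
  intro x
  dsimp only
  have hc : (0:ℝ) ≤ 2 + 3 * α₀ ^ 2 := by positivity
  rw [← ENNReal.ofReal_mul hc]
  apply ENNReal.ofReal_le_ofReal
  set D : Fin d → ℂ := fun j => fderiv ℝ u x (EuclideanSpace.single j 1) with hD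
  set M : Fin d → ℂ := fun j => D j - Complex.I * (A x j : ℂ) * u x with hM
  have hsum : (∑ j : Fin d, ‖D j‖ ^ 2) ≤
      2 * (∑ j : Fin d, ‖M j‖ ^ 2) + 2 * (∑ j : Fin d, (A x j) ^ 2) * ‖u x‖ ^ 2 := by
    have h1 : (∑ j : Fin d, ‖D j‖ ^ 2) ≤
        ∑ j : Fin d, (2 * ‖M j‖ ^ 2 + 2 * (A x j) ^ 2 * ‖u x‖ ^ 2) := by
      apply Finset.sum_le_sum
      intro j _
      have htri : ‖D j‖ ≤ ‖M j‖ + ‖Complex.I * (A x j : ℂ) * u x‖ := by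
        have : D j = M j + Complex.I * (A x j : ℂ) * u x := by simp [hM]
        rw [this]; exact norm_add_le _ _
      have hn : ‖Complex.I * (A x j : ℂ) * u x‖ = |A x j| * ‖u x‖ := by
        simp [norm_mul, Complex.norm_real, abs_mul]
      rw [hn] at htri
      have h0 : (0:ℝ) ≤ ‖D j‖ := norm_nonneg _
      nlinarith [norm_nonneg (M j), norm_nonneg (u x), abs_nonneg (A x j),
        sq_abs (A x j), sq_nonneg (‖M j‖ - |A x j| * ‖u x‖)]
    rw [Finset.sum_add_distrib] at h1
    rw [← Finset.mul_sum] at h1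
    calc (∑ j : Fin d, ‖D j‖ ^ 2) ≤ _ := h1
      _ = 2 * (∑ j : Fin d, ‖M j‖ ^ 2) + 2 * (∑ j : Fin d, (A x j) ^ 2) * ‖u x‖ ^ 2 := by
        rw [Finset.mul_sum, Finset.mul_sum, Finset.sum_mul]
  have hA2 : ‖A x‖ ^ 2 = ∑ j : Fin d, (A x j) ^ 2 := by
    rw [EuclideanSpace.norm_eq, Real.sq_sqrt (by positivity)]
    simp [sq_abs]
  rw [← hA2] at hsum
  have hAVx := hAV x
  have hMnn : (0:ℝ) ≤ ∑ j : Fin d, ‖M j‖ ^ 2 := by positivity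
  nlinarith [norm_nonneg (u x), abs_nonneg (V x), sq_nonneg α₀, sq_nonneg ‖u x‖,
    mul_nonneg (abs_nonneg (V x)) (sq_nonneg ‖u x‖),
    mul_le_mul_of_nonneg_right hAVx (sq_nonneg ‖u x‖),
    mul_nonneg (mul_nonneg (sq_nonneg α₀) (abs_nonneg (V x))) (sq_nonneg ‖u x‖)]
end
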